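/- Let E be a Γ-semilattice with action τ, let e ∈ E×, let {e_j}_{j∈J} be a finite subset of E× with e_j ⪇ e for all j ∈ J, and let g ∈ Γ. If τ_g(e − ⋁_{j∈J} e_j) = e − ⋁_{j∈J} e_j in ℤ[E×], then τ_g(e) = e. -/

import Mathlib

set_option linter.unusedSectionVars false

/-- A *semilattice with zero*: a commutative idempotent semigroup with an
absorbing element `0`. -/
class SemilatticeWithZero (E : Type) extends CommSemigroup E, Zero E where
  mul_idem : ∀ e : E, e * e = e
  zero_mul : ∀ e : E, 0 * e = 0

namespace IndRes

variable {E : Type} [SemilatticeWithZero E]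

/-- `single e c`, viewed in the semigroup algebra `ℤ[E]`. -/
noncomputable def sgl (e : E) (c : ℤ) : MonoidAlgebra ℤ E := MonoidAlgebra.single e c

/-- Truncation map deleting the coefficient at `0`. -/
noncomputable def T (x : MonoidAlgebra ℤ E) : MonoidAlgebra ℤ E := x - sgl 0 (x.coeff 0)

lemma sgl_apply_self (e : E) (c : ℤ) : (sgl e c).coeff e = c := Finsupp.single_eq_same

lemma sgl_apply_ne (e d : E) (c : ℤ) (h : e ≠ d) : (sgl e c).coeff d = 0 := Finsupp.single_eq_of_ne h.symm

lemma sgl_add (e : E) (c d : ℤ) : sgl e (c + d) = sgl e c + sgl e d := MonoidAlgebra.single_add e c d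

lemma sgl_sub (e : E) (c d : ℤ) : sgl e (c - d) = sgl e c - sgl e d := MonoidAlgebra.single_sub e c d

lemma T_apply_zero (x : MonoidAlgebra ℤ E) : (T x).coeff 0 = 0 := by
  show ((x - sgl 0 (x.coeff 0) : MonoidAlgebra ℤ E)).coeff 0 = 0
  rw [MonoidAlgebra.coeff_sub, Finsupp.sub_apply, sgl_apply_self, sub_self]

/-- `ℤ[E^×]`, realized as the additive subgroup of the semigroup algebra
`ℤ[E]` consisting of the elements whose coefficient at `0` vanishes; it is the free
`ℤ`-module with basis `E^× = E \ {0}`. -/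
noncomputable def ZS (E : Type) [SemilatticeWithZero E] : AddSubgroup (MonoidAlgebra ℤ E) where
  carrier := {x | x.coeff 0 = 0}
  zero_mem' := rfl
  add_mem' := by
    intro a b ha hb
    simp only [Set.mem_setOf_eq] at *
    rw [MonoidAlgebra.coeff_add, Finsupp.add_apply, ha, hb, add_zero]
  neg_mem' := by
    intro a ha
    simp only [Set.mem_setOf_eq] at *
    rw [MonoidAlgebra.coeff_neg, Finsupp.neg_apply, ha, neg_zero]

/-- The integral semigroup ring `ℤ[E^×]`. -/
abbrev ZE (E : Type) [SemilatticeWithZero E] : Type := ↥(ZS E)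

lemma mem_ZS {x : MonoidAlgebra ℤ E} : x ∈ ZS E ↔ x.coeff 0 = 0 := Iff.rfl

lemma T_eq_self {x : MonoidAlgebra ℤ E} (h : x.coeff 0 = 0) : T x = x := by
  simp [T, h, sgl]

lemma T_add (a b : MonoidAlgebra ℤ E) : T (a + b) = T a + T b := by
  unfold T
  rw [show ((a + b).coeff 0) = a.coeff 0 + b.coeff 0 from Finsupp.add_apply a.coeff b.coeff 0, sgl_add]
  abel

lemma T_sub_sgl (x : MonoidAlgebra ℤ E) (m : ℤ) : T (x - sgl 0 m) = T x := by
  unfold T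
  have h : ((x - sgl 0 m : MonoidAlgebra ℤ E)).coeff 0 = x.coeff 0 - m := by
    rw [MonoidAlgebra.coeff_sub, Finsupp.sub_apply, sgl_apply_self]
  rw [h, sgl_sub]
  abel

lemma single_zero_mul (c : ℤ) (b : MonoidAlgebra ℤ E) :
    (sgl 0 c) * b = sgl 0 (((sgl 0 c * b : MonoidAlgebra ℤ E)).coeff 0) := by
  classical
  ext d
  by_cases hd : d = 0
  · subst hd; rw [sgl_apply_self]
  · rw [sgl_apply_ne 0 d _ (Ne.symm hd)]
    by_contra h
    have hmem : d ∈ ((sgl (0:E) c) * b).coeff.support := Finsupp.mem_support_iff.mpr h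
    have h2 := MonoidAlgebra.support_coeff_mul_subset (sgl (0:E) c) b hmem
    rw [Finset.mem_mul] at h2
    obtain ⟨a, ha, b', _, hab⟩ := h2
    have ha' : a = 0 := by
      have := Finsupp.support_single_subset (ha : a ∈ (Finsupp.single (0:E) c).support)
      simpa using this
    exact hd (by rw [← hab, ha', SemilatticeWithZero.zero_mul])

lemma T_mul_left (a b : MonoidAlgebra ℤ E) : T (T a * b) = T (a * b) := by
  have h1 : T a * b = a * b - (sgl 0 (a.coeff 0)) * b := by rw [T, sub_mul]
  rw [h1, single_zero_mul, T_sub_sgl]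

lemma T_mul_right (a b : MonoidAlgebra ℤ E) : T (a * T b) = T (a * b) := by
  rw [mul_comm a (T b), T_mul_left, mul_comm]

noncomputable instance : Mul (ZE E) :=
  ⟨fun x y => ⟨T (x.1 * y.1), T_apply_zero _⟩⟩

lemma ZE.val_mul (x y : ZE E) : (x * y).1 = T (x.1 * y.1) := rfl

noncomputable instance : NonUnitalCommRing (ZE E) :=
  { (inferInstance : AddCommGroup (ZE E)) with
    mul := (· * ·)
    left_distrib := by
      intro x y z
      apply Subtype.ext
      show T (x.1 * (y.1 + z.1)) = T (x.1 * y.1) + T (x.1 * z.1)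
      rw [mul_add, T_add]
    right_distrib := by
      intro x y z
      apply Subtype.ext
      show T ((x.1 + y.1) * z.1) = T (x.1 * z.1) + T (y.1 * z.1)
      rw [add_mul, T_add]
    zero_mul := by
      intro x
      apply Subtype.ext
      show T ((0 : MonoidAlgebra ℤ E) * x.1) = 0
      rw [zero_mul]
      simp [T, sgl]
    mul_zero := by
      intro x
      apply Subtype.ext
      show T (x.1 * (0 : MonoidAlgebra ℤ E)) = 0
      rw [mul_zero]
      simp [T, sgl]
    mul_assoc := by
      intro x y z
      apply Subtype.ext
      show T (T (x.1 * y.1) * z.1) = T (x.1 * T (y.1 * z.1))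
      rw [T_mul_left, T_mul_right, mul_assoc]
    mul_comm := by
      intro x y
      apply Subtype.ext
      show T (x.1 * y.1) = T (y.1 * x.1)
      rw [mul_comm] }

/-- The canonical image of `e ∈ E` in `ℤ[E^×]`: the basis element `e` if `e ≠ 0`,
and `0` if `e = 0`. -/
noncomputable def elt (e : E) : ZE E := ⟨T (sgl e 1), T_apply_zero _⟩

/-- Product of a (nonempty) finite family in a commutative non-unital ring, computed inside
the unitization.  For a nonempty index set this is the iterated product. -/
noncomputable def nprod {ι A : Type} [NonUnitalCommRing A] (s : Finset ι) (f : ι → A) : A :=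
  (∏ j ∈ s, (Unitization.inr (f j) : Unitization ℤ A)).snd

/-- The join `⋁_{j ∈ J} x_j = ∑_{∅ ≠ J' ⊆ J} (-1)^{|J'|+1} ∏_{j ∈ J'} x_j`
of a finite family of idempotents of a commutative non-unital ring. -/
noncomputable def rjoin {ι A : Type} [NonUnitalCommRing A] (s : Finset ι) (f : ι → A) : A :=
  ∑ t ∈ s.powerset.filter (fun t => t.Nonempty), ((-1 : ℤ) ^ (t.card + 1)) • nprod t f

/-- The join `⋁_{j ∈ J} e_j ∈ ℤ[E^×]` of a finite family of elements of `E`: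
`∑_{∅ ≠ J' ⊆ J} (-1)^{|J'|+1} ∏_{j ∈ J'} e_j`, where a product whose value in `E`
is `0` contributes `0`. -/
noncomputable def join {ι : Type} (s : Finset ι) (e : ι → E) : ZE E :=
  rjoin s (fun j => elt (e j))

/-- Iterated product of a nonempty list in a semigroup with zero (the value on the
empty list is the junk value `0`). -/
def listProd : List E → E
  | [] => 0
  | [a] => a
  | a :: b :: l => a * listProd (b :: l)

/-- The product `∏_{j ∈ s} f j ∈ E` of a (nonempty) finite family. -/
noncomputable def eprod {ι : Type} (s : Finset ι) (f : ι → E) : E :=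
  listProd (s.toList.map f)

/-- The support `E(x)` of `x ∈ ℤ[E^×]`: the finite set of elements of `E^×` appearing
with a nonzero coefficient in the reduced form of `x`. -/
noncomputable def supp (x : ZE E) : Finset E := x.1.coeff.support

section Action

variable {Γ : Type} [Group Γ] [MulAction Γ E]

/-- The induced action of `g ∈ Γ` on `ℤ[E^×]`: the `ℤ`-linear map sending a basis
element `e ∈ E^×` to `g • e`.  (When the action fixes `0` — which is the case for an
action by semigroup automorphisms fixing `0` — the truncation `T` is a no-op, and this
is the automorphism of `ℤ[E^×]` induced by `τ_g`.) -/
noncomputable def act (g : Γ) (x : ZE E) : ZE E :=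
  ⟨T (MonoidAlgebra.ofCoeff (Finsupp.mapDomain (fun e : E => g • e) x.1.coeff)), T_apply_zero _⟩

end Action



attribute [local instance] Classical.propDecidable

variable {E : Type} [SemilatticeWithZero E]

/-- A Γ-semilattice structure: the group acts by semigroup automorphisms fixing `0`. -/
def IsGammaSL (Γ E : Type) [Group Γ] [SemilatticeWithZero E] [MulAction Γ E] : Prop :=
  (∀ (g : Γ) (x y : E), g • (x * y) = (g • x) * (g • y)) ∧ (∀ g : Γ, g • (0 : E) = 0)

/-- The set `E_φ`. -/
def Ephi {D : Type} [NonUnitalCommRing D] (φ : ZE E →ₙ+* D) : Set (ZE E) :=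
  { x | ∃ (e : E) (J : Finset E), e ≠ 0 ∧ (∀ f ∈ J, f ≠ 0 ∧ f * e = f ∧ f ≠ e) ∧
      x = elt e - join J (fun f => f) ∧
      φ (elt e) = rjoin J (fun f => φ (elt f)) }

/-- `R` is a finite cover for `e ∈ E^×`. -/
def IsCover (e : E) (R : Finset E) : Prop :=
  (∀ f ∈ R, f ≠ 0 ∧ f * e = f) ∧
  ∀ f' : E, f' ≠ 0 → f' * e = f' → ∃ f ∈ R, f' * f ≠ 0

/-- `ℛ` is a collection of finite covers for `E`. -/
def CovSystem (ℛ : E → Set (Finset E)) : Prop :=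
  ∀ e : E, e ≠ 0 → ∀ R ∈ ℛ e, IsCover e R

/-- Condition (i). -/
def CondI (ℛ : E → Set (Finset E)) : Prop :=
  ∀ d e : E, d ≠ 0 → e ≠ 0 → d * e ≠ 0 → ∀ R ∈ ℛ e,
    d * e ∈ (R.image (fun f => d * f)).erase 0 ∨ (R.image (fun f => d * f)).erase 0 ∈ ℛ (d * e)

/-- Condition (ii). -/
def CondII (ℛ : E → Set (Finset E)) : Prop :=
  ∀ e : E, e ≠ 0 → ∀ r : ℕ, 0 < r → ∀ Rs : Fin r → Finset E,
    Function.Injective Rs → (∀ i, Rs i ∈ ℛ e) → ∀ ε : Fin r → E,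
    (∀ i, ε i ∈ supp (join (Rs i) (fun f => f))) → ∀ j : Fin r,
      (if r = 1 then e else eprod (Finset.univ.erase j) ε) ≠ 0 →
      eprod Finset.univ ε * (if r = 1 then e else eprod (Finset.univ.erase j) ε)
          = eprod Finset.univ ε ∧
      eprod Finset.univ ε ≠ (if r = 1 then e else eprod (Finset.univ.erase j) ε)

/-- Condition (iii). -/
def CondIII (Γ : Type) [Group Γ] [MulAction Γ E] (ℛ : E → Set (Finset E)) : Prop :=
  ∀ (g : Γ) (e : E), e ≠ 0 →
    (fun R : Finset E => R.image (fun f => g • f)) '' (ℛ e) = ℛ (g • e)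

/-- `e(𝒮) = ∏_{R ∈ 𝒮} (e - ⋁R) ∈ ℤ[E^×]`. -/
noncomputable def eS (e : E) (S : Finset (Finset E)) : ZE E :=
  nprod S (fun R => elt e - join R (fun f => f))

/-- `E(E,ℛ) = {e(𝒮) : e ∈ E^×, 𝒮 ⊆ ℛ(e) nonempty finite} ∪ {0} ⊆ ℤ[E^×]`. -/
def EER (ℛ : E → Set (Finset E)) : Set (ZE E) :=
  {x | ∃ (e : E) (S : Finset (Finset E)), e ≠ 0 ∧ S.Nonempty ∧ ↑S ⊆ ℛ e ∧ x = eS e S} ∪ {0}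

/-- `R(𝒮,R̃) = {e(𝒮 ∪ {R̃})} ∪ {f ⬝ e(𝒮) : f ∈ R̃, f ⬝ e(𝒮) ≠ 0}`. -/
noncomputable def RSR (e : E) (S : Finset (Finset E)) (Rt : Finset E) : Finset (ZE E) :=
  insert (eS e (insert Rt S)) ((Rt.image (fun f => elt f * eS e S)).erase 0)

/-- The collection of finite covers `ℛ(E,ℛ)` on `E(E,ℛ)`, assigning to an element
`x = e(𝒮)` of `E(E,ℛ)^×` the covers `R(𝒮,R̃)`, `R̃ ∈ ℛ(e) ∖ 𝒮` (over all ways of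
presenting `x` in the form `e(𝒮)`). -/
def RER (ℛ : E → Set (Finset E)) (x : ZE E) : Set (Finset (ZE E)) :=
  {C | ∃ (e : E) (S : Finset (Finset E)) (Rt : Finset E),
        e ≠ 0 ∧ S.Nonempty ∧ ↑S ⊆ ℛ e ∧ Rt ∈ ℛ e ∧ Rt ∉ S ∧ x = eS e S ∧ C = RSR e S Rt}

/-- The `ℤ`-linear map `ℤ[E₁^×] → ℤ[E₂^×]` induced by a map `θ` from `E₁` to `ℤ[E₂^×]`,
sending a basis element `e' ∈ E₁^×` to `θ e'`. -/
noncomputable def indMap {E₁ E₂ : Type} [SemilatticeWithZero E₁] [SemilatticeWithZero E₂]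
    (θ : E₁ → ZE E₂) : ZE E₁ →ₗ[ℤ] ZE E₂ :=
  (Finsupp.linearCombination ℤ θ).comp ((MonoidAlgebra.coeffAddEquiv.toAddMonoidHom.comp (ZS E₁).subtype).toIntLinearMap)

/-- `(E₁, ℛ₁, θ)` is a realization of the construction `(E(E,ℛ), ℛ(E,ℛ))`:
`θ` identifies the abstract Γ-semilattice `E₁` with `E(E,ℛ) ⊆ ℤ[E^×]` (equivariantly,
multiplicatively and preserving `0`), and `ℛ₁` corresponds to `ℛ(E,ℛ)` under this
identification. -/
def Realizes {Γ E E₁ : Type} [Group Γ] [SemilatticeWithZero E] [MulAction Γ E]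
    [SemilatticeWithZero E₁] [MulAction Γ E₁]
    (ℛ : E → Set (Finset E)) (ℛ₁ : E₁ → Set (Finset E₁)) (θ : E₁ → ZE E) : Prop :=
  Function.Injective θ ∧ Set.range θ = EER ℛ ∧ θ 0 = 0 ∧
  (∀ x y : E₁, θ (x * y) = θ x * θ y) ∧
  (∀ (g : Γ) (x : E₁), θ (g • x) = act g (θ x)) ∧
  (∀ e' : E₁, e' ≠ 0 → ∀ C : Finset E₁, C ∈ ℛ₁ e' ↔ C.image θ ∈ RER ℛ (θ e'))

end IndRes

open IndRes

/-!
Elements strictly below `e` form a subsemigroup of `E`, so the join of the `e_j ⪇ e` is supported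
on it; hence `x := e - ⋁_{j ∈ J} e_j` has coefficient `1` at `e` and its support lies below `e`.
Since `τ_g` permutes the basis, `τ_g x = x` gives `x(τ_g e) = x(e) = 1` and `x(τ_g⁻¹ e) = 1`,
so `τ_g e ≤ e` and `τ_g⁻¹ e ≤ e`, i.e. `τ_g e = e`.
-/

namespace IndRes

variable {E : Type} [SemilatticeWithZero E]

lemma coeff_T_of_ne_zero (y : MonoidAlgebra ℤ E) {d : E} (hd : d ≠ 0) :
    (T y).coeff d = y.coeff d := by
  rw [T, MonoidAlgebra.coeff_sub, Finsupp.sub_apply, sgl_apply_ne 0 d _ hd.symm, sub_zero]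

lemma support_T_subset (y : MonoidAlgebra ℤ E) : (T y).coeff.support ⊆ y.coeff.support := by
  intro d hd
  have hd0 : d ≠ 0 := by
    rintro rfl
    exact Finsupp.mem_support_iff.mp hd (T_apply_zero y)
  rwa [Finsupp.mem_support_iff, ← coeff_T_of_ne_zero y hd0, ← Finsupp.mem_support_iff]

lemma coeff_elt {e : E} (he : e ≠ 0) : (elt e).1.coeff = Finsupp.single e 1 := by
  ext d
  by_cases hd : d = 0
  · subst hd
    rw [Finsupp.single_eq_of_ne he.symm]
    exact T_apply_zero _
  · exact coeff_T_of_ne_zero _ hd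

lemma supp_elt {e : E} (he : e ≠ 0) : supp (elt e) = {e} := by
  rw [supp, coeff_elt he, Finsupp.support_single _ one_ne_zero]

noncomputable def supportedIn (S : Subsemigroup E) : NonUnitalSubring (ZE E) where
  carrier := {x | ↑(supp x) ⊆ (S : Set E)}
  zero_mem' := by simp [supp]
  add_mem' {x y} hx hy := by
    classical
    refine subset_trans ?_ (Set.union_subset hx hy)
    exact_mod_cast Finsupp.support_add (g₁ := x.1.coeff) (g₂ := y.1.coeff)
  neg_mem' {x} hx := by
    change ↑(-x.1.coeff).support ⊆ (S : Set E)
    rwa [Finsupp.support_neg]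
  mul_mem' {x y} hx hy := by
    classical
    intro d hd
    obtain ⟨a, ha, b, hb, rfl⟩ :=
      Finset.mem_mul.mp (MonoidAlgebra.support_coeff_mul_subset x.1 y.1 (support_T_subset _ hd))
    exact S.mul_mem (hx ha) (hy hb)

lemma mem_supportedIn {S : Subsemigroup E} {x : ZE E} :
    x ∈ supportedIn S ↔ ↑(supp x) ⊆ (S : Set E) := Iff.rfl

def strictlyBelow (e : E) : Subsemigroup E where
  carrier := {d | d * e = d ∧ d ≠ e}
  mul_mem' {a b} ha hb := by
    refine ⟨by rw [mul_assoc, hb.1], fun hab => ha.2 ?_⟩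
    calc a = a * (a * b) := by rw [hab, ha.1]
      _ = a * b := by rw [← mul_assoc, SemilatticeWithZero.mul_idem]
      _ = e := hab

section JoinMembership

variable {ι A : Type} [NonUnitalCommRing A]

lemma nprod_mem (R : NonUnitalSubring A) (s : Finset ι) {f : ι → A}
    (hf : ∀ j ∈ s, f j ∈ R) : nprod s f ∈ R := by
  classical
  induction s using Finset.induction_on with
  | empty => simp [nprod, zero_mem]
  | insert a s ha ih =>
    have hP := ih fun j hj => hf j (Finset.mem_insert_of_mem hj)
    have hfa := hf a (Finset.mem_insert_self a s)
    rw [nprod, Finset.prod_insert ha, Unitization.snd_mul, Unitization.fst_inr,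
      Unitization.snd_inr, zero_smul, zero_add]
    exact add_mem (zsmul_mem hfa _) (mul_mem hfa hP)

lemma rjoin_mem (R : NonUnitalSubring A) (s : Finset ι) {f : ι → A}
    (hf : ∀ j ∈ s, f j ∈ R) : rjoin s f ∈ R :=
  sum_mem fun t ht =>
    zsmul_mem (nprod_mem R t fun j hj =>
      hf j (Finset.mem_powerset.mp (Finset.mem_filter.mp ht).1 hj)) _

end JoinMembership

variable {Γ : Type} [Group Γ] [MulAction Γ E]

lemma join_mem_supportedIn_strictlyBelow {e : E} {J : Finset E}
    (hJ : ∀ f ∈ J, f ≠ 0 ∧ f * e = f ∧ f ≠ e) :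
    join J (fun f => f) ∈ supportedIn (strictlyBelow e) :=
  rjoin_mem _ J fun f hf => by
    obtain ⟨hf0, hfe, hfne⟩ := hJ f hf
    rw [mem_supportedIn, supp_elt hf0, Finset.coe_singleton, Set.singleton_subset_iff]
    exact ⟨hfe, hfne⟩

lemma coeff_act_smul {g : Γ} (hg : g • (0 : E) = 0) (x : ZE E) (d : E) :
    (act g x).1.coeff (g • d) = x.1.coeff d := by
  by_cases hd : d = 0
  · subst hd
    rw [hg, mem_ZS.mp x.2]
    exact T_apply_zero _
  · have hgd : g • d ≠ 0 := by rwa [← hg, Ne, smul_left_cancel_iff]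
    rw [act, coeff_T_of_ne_zero _ hgd]
    exact Finsupp.mapDomain_apply (MulAction.injective g) _ d

lemma smul_eq_of_act_eq_self (hact : IsGammaSL Γ E) {g : Γ} {x : ZE E} (hfix : act g x = x)
    {e : E} (hxe : x.1.coeff e ≠ 0) (hbelow : ∀ d ∈ supp x, d * e = d) : g • e = e := by
  have hinv : ∀ h : Γ, act h x = x → (h • e) * e = h • e := fun h hh =>
    hbelow _ <| Finsupp.mem_support_iff.mpr <| by
      rwa [← hh, coeff_act_smul (hact.2 h)]
  have hle : (g • e) * e = g • e := hinv g hfix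
  have hge : e * (g • e) = e := by
    have hfix' : act g⁻¹ x = x := by
      ext1; ext d
      calc (act g⁻¹ x).1.coeff d = (act g⁻¹ x).1.coeff (g⁻¹ • g • d) := by
            rw [inv_smul_smul]
        _ = x.1.coeff (g • d) := coeff_act_smul (hact.2 g⁻¹) x _
        _ = (act g x).1.coeff (g • d) := by rw [hfix]
        _ = x.1.coeff d := coeff_act_smul (hact.2 g) x d
    simpa [hact.1 g] using congrArg (g • ·) (hinv g⁻¹ hfix')
  rw [← hle, mul_comm, hge]

end IndRes

theorem statement_5 {E Γ : Type} [SemilatticeWithZero E] [Group Γ] [MulAction Γ E]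
    (hact : IsGammaSL Γ E)
    (e : E) (he : e ≠ 0) (J : Finset E)
    (hJ : ∀ f ∈ J, f ≠ 0 ∧ f * e = f ∧ f ≠ e)
    (g : Γ)
    (hfix : act g (elt e - join J (fun f => f)) = elt e - join J (fun f => f)) :
    g • e = e := by
  have hjoin := mem_supportedIn.mp (join_mem_supportedIn_strictlyBelow hJ)
  have hcoeff : ∀ d, (elt e - join J (fun f => f)).1.coeff d
      = Finsupp.single e 1 d - (join J (fun f => f)).1.coeff d := fun d => by
    rw [AddSubgroup.coe_sub, MonoidAlgebra.coeff_sub, Finsupp.sub_apply, coeff_elt he]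
  have hjoin_e : (join J (fun f => f)).1.coeff e = 0 :=
    Finsupp.notMem_support_iff.mp fun h => (hjoin h).2 rfl
  have hxe : (elt e - join J (fun f => f)).1.coeff e ≠ 0 := by
    rw [hcoeff, hjoin_e, Finsupp.single_eq_same]
    exact one_ne_zero
  refine smul_eq_of_act_eq_self hact hfix hxe fun d hd => ?_
  by_cases hde : d = e
  · rw [hde, SemilatticeWithZero.mul_idem]
  · have hd' : (join J (fun f => f)).1.coeff d ≠ 0 := by
      rwa [supp, Finsupp.mem_support_iff, hcoeff, Finsupp.single_eq_of_ne hde, zero_sub,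
        neg_ne_zero] at hd
    exact (hjoin (Finsupp.mem_support_iff.mpr hd')).1
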